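/- arXiv:2112.12977 — 5 statements merged into one kernel-verified Lean document; each statement's English description precedes it below -/
import Mathlib

section
/- Let T be a resolving subcategory of an abelian category A with enough projectives. If 0 → A₁ → A₂ → A₃ → 0 is a short exact sequence, then T-pd A₁ ≤ max{T-pd A₂, T-pd A₃ − 1}. -/
open CategoryTheory

universe v u

namespace RelHomDim

variable {C : Type u} [Category.{v} C] [Abelian C]

/-- A (full, additive, iso-closed) subcategory, given as a predicate on objects,
is *resolving* if it contains all projective objects, is closed under extensions,
kernels of epimorphisms, and direct summands (retracts). -/
def IsResolving (T : C → Prop) : Prop :=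
  (∀ X Y : C, (X ≅ Y) → T X → T Y) ∧
  (∀ P : C, Projective P → T P) ∧
  (∀ S : ShortComplex C, S.ShortExact → T S.X₁ → T S.X₃ → T S.X₂) ∧
  (∀ S : ShortComplex C, S.ShortExact → T S.X₂ → T S.X₃ → T S.X₁) ∧
  (∀ X Y : C, T (X ⊞ Y) → T X)

/-- `pdLE T n M` means that `M` admits a resolution
`0 → Xₙ → ⋯ → X₁ → X₀ → M → 0` with all `Xᵢ` in `T`, i.e. the `T`-projective
dimension of `M` is at most `n`. -/
def pdLE (T : C → Prop) : ℕ → C → Prop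
  | 0, M => T M
  | n + 1, M => ∃ S : ShortComplex C, S.ShortExact ∧ Nonempty (S.X₃ ≅ M) ∧
      T S.X₂ ∧ pdLE T n S.X₁

/-- The `T`-projective dimension of `M`, as an element of `ℕ∞` (`⊤` if `M` has no
finite resolution by objects of `T`). -/
noncomputable def pd (T : C → Prop) (M : C) : ℕ∞ :=
  sInf {n : ℕ∞ | ∃ k : ℕ, n = (k : ℕ∞) ∧ pdLE T k M}

end RelHomDim

namespace RelHomDimAux

open RelHomDim CategoryTheory.Limits

variable {C : Type u} [Category.{v} C] [Abelian C]

section SES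

lemma shortExact_kernel {Y B : C} (h : Y ⟶ B) [Epi h] :
    (ShortComplex.mk (kernel.ι h) h (kernel.condition h)).ShortExact := by
  refine ShortComplex.ShortExact.mk' ?_ inferInstance inferInstance
  exact ShortComplex.exact_of_f_is_kernel _ (kernelIsKernel h)

lemma shortExact_pullback (S : ShortComplex C) (hS : S.ShortExact) {Z : C} (ρ : Z ⟶ S.X₃) :
    (ShortComplex.mk (pullback.lift S.f 0 (by rw [S.zero, zero_comp]))
      (pullback.snd S.g ρ) (by rw [pullback.lift_snd])).ShortExact := by
  haveI := hS.mono_f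
  haveI := hS.epi_g
  have hfst : pullback.lift S.f 0 (show S.f ≫ S.g = 0 ≫ ρ by rw [S.zero, zero_comp]) ≫
      pullback.fst S.g ρ = S.f := pullback.lift_fst _ _ _
  haveI : Mono (pullback.lift S.f 0 (show S.f ≫ S.g = 0 ≫ ρ by rw [S.zero, zero_comp]) ≫
      pullback.fst S.g ρ) := by rw [hfst]; infer_instance
  haveI : Mono (pullback.lift S.f 0 (show S.f ≫ S.g = 0 ≫ ρ by rw [S.zero, zero_comp])) :=
    mono_of_mono _ (pullback.fst S.g ρ)
  refine ShortComplex.ShortExact.mk' ?_ inferInstance inferInstance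
  apply ShortComplex.exact_of_f_is_kernel
  refine KernelFork.IsLimit.ofι' _ _ (fun {A} k hk => ⟨hS.exact.lift (k ≫ pullback.fst S.g ρ)
      (by rw [Category.assoc, pullback.condition, ← Category.assoc, hk, zero_comp]), ?_⟩)
  apply pullback.hom_ext
  · simp only [Category.assoc, hfst, ShortComplex.Exact.lift_f]
  · simp [hk, pullback.lift_snd]

lemma shortExact_pullback' (S : ShortComplex C) (hS : S.ShortExact) {Y : C} (e : Y ⟶ S.X₂)
    [Epi e] :
    (ShortComplex.mk (pullback.fst e S.f) (e ≫ S.g)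
      (by rw [pullback.condition_assoc, S.zero, comp_zero])).ShortExact := by
  haveI := hS.mono_f
  haveI := hS.epi_g
  refine ShortComplex.ShortExact.mk' ?_ inferInstance inferInstance
  apply ShortComplex.exact_of_f_is_kernel
  refine KernelFork.IsLimit.ofι' _ _ (fun {A} k hk =>
    ⟨pullback.lift k (hS.exact.lift (k ≫ e) (by rw [Category.assoc]; exact hk))
      (by rw [ShortComplex.Exact.lift_f]), pullback.lift_fst _ _ _⟩)

lemma shortExact_biprod (X Y : C) :
    (ShortComplex.mk (biprod.inl : X ⟶ X ⊞ Y) biprod.snd (by simp)).ShortExact :=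
  ShortComplex.Splitting.shortExact
    { r := biprod.fst
      s := biprod.inr
      f_r := by simp
      s_g := by simp
      id := by simp [biprod.total] }

end SES

section pdLE

variable {T : C → Prop}

lemma pdLE_iso (hT : IsResolving T) {M N : C} (e : M ≅ N) :
    ∀ {n : ℕ}, pdLE T n M → pdLE T n N
  | 0, h => hT.1 _ _ e h
  | n + 1, ⟨S, hS, ⟨e'⟩, h2, h1⟩ => ⟨S, hS, ⟨e'.trans e⟩, h2, h1⟩

/-- Extract a resolution step with the quotient being `M` on the nose. -/
lemma exists_res {n : ℕ} {M : C} (h : pdLE T (n + 1) M) :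
    ∃ (K Y : C) (f : K ⟶ Y) (g : Y ⟶ M) (w : f ≫ g = 0),
      (ShortComplex.mk f g w).ShortExact ∧ T Y ∧ pdLE T n K := by
  obtain ⟨S, hS, ⟨e⟩, hY, hK⟩ := h
  refine ⟨S.X₁, S.X₂, S.f, S.g ≫ e.hom, by rw [← Category.assoc, S.zero, zero_comp], ?_, hY, hK⟩
  exact ShortComplex.shortExact_of_iso
    (ShortComplex.isoMk (S₁ := S) (Iso.refl _) (Iso.refl _) e (by simp) (by simp)) hS

/-- If `0 → A → W → Q → 0` is short exact with `Q` projective, then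
`pdLE n A → pdLE n W`. -/
lemma pdLE_X2_of_projective_X3 (hT : IsResolving T) (Sw : ShortComplex C)
    (hSw : Sw.ShortExact) (hQ : Projective Sw.X₃) :
    ∀ {a : ℕ}, pdLE T a Sw.X₁ → pdLE T a Sw.X₂ := by
  intro a h
  haveI := hSw.mono_f
  haveI := hSw.epi_g
  match a, h with
  | 0, h => exact hT.2.2.1 Sw hSw h (hT.2.1 _ hQ)
  | a + 1, h =>
    obtain ⟨K, Y, f₁, g₁, w₁, hS₁, hY, hK⟩ := exists_res h
    haveI := hS₁.mono_f
    haveI := hS₁.epi_g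
    set s : Sw.X₃ ⟶ Sw.X₂ := @Projective.factorThru _ _ _ _ _ hQ (𝟙 Sw.X₃) Sw.g _ with hs
    have hsg : s ≫ Sw.g = 𝟙 Sw.X₃ := @Projective.factorThru_comp _ _ _ _ _ hQ _ _ _
    set φ : Y ⊞ Sw.X₃ ⟶ Sw.X₂ := biprod.desc (g₁ ≫ Sw.f) s with hφ
    have hw : (f₁ ≫ biprod.inl) ≫ φ = 0 := by
      simp [hφ, reassoc_of% w₁]
    have hφg : φ ≫ Sw.g = biprod.snd := by
      ext
      · simp [hφ, Sw.zero]
      · simp [hφ, hsg]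
    haveI : Mono (f₁ ≫ (biprod.inl : Y ⟶ Y ⊞ Sw.X₃)) := mono_comp _ _
    haveI : Epi φ := by
      rw [Preadditive.epi_iff_cancel_zero]
      intro Z t ht
      have h1 : g₁ ≫ Sw.f ≫ t = 0 := by
        have := biprod.inl ≫= ht
        simpa [hφ] using this
      have h2 : Sw.f ≫ t = 0 := by
        rw [← cancel_epi g₁, comp_zero]; exact h1
      obtain ⟨u, hu⟩ := hSw.exact.desc' t h2
      have h3 : s ≫ t = 0 := by
        have := biprod.inr ≫= ht
        simpa [hφ] using this
      have hu0 : u = 0 := by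
        rw [← hu] at h3
        rw [← Category.id_comp u, ← hsg, Category.assoc, h3]
      rw [← hu, hu0, comp_zero]
    have hSE : (ShortComplex.mk (f₁ ≫ biprod.inl) φ hw).ShortExact := by
      refine ShortComplex.ShortExact.mk' ?_ inferInstance inferInstance
      apply ShortComplex.exact_of_f_is_kernel
      refine KernelFork.IsLimit.ofι' _ _ (fun {A} k hk => ?_)
      have hk2 : k ≫ biprod.snd = 0 := by
        rw [← hφg, ← Category.assoc, hk, zero_comp]
      have htot : k = (k ≫ biprod.fst) ≫ biprod.inl := by
        have h := k ≫= biprod.total (X := Y) (Y := Sw.X₃)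
        rw [Category.comp_id, Preadditive.comp_add, ← Category.assoc, ← Category.assoc,
          hk2, zero_comp, add_zero] at h
        exact h.symm
      have hk1 : ((k ≫ biprod.fst) ≫ g₁) ≫ Sw.f = 0 := by
        have h : (k ≫ biprod.fst) ≫ (biprod.inl ≫ φ) = 0 := by
          rw [← Category.assoc, ← htot, hk]
        rw [biprod.inl_desc] at h
        simpa using h
      have hk1' : (k ≫ biprod.fst) ≫ g₁ = 0 := by
        rw [← cancel_mono Sw.f, zero_comp]
        exact hk1
      refine ⟨hS₁.exact.lift (k ≫ biprod.fst) hk1', ?_⟩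
      have hl : hS₁.exact.lift (k ≫ biprod.fst) hk1' ≫ f₁ = k ≫ biprod.fst :=
        hS₁.exact.lift_f _ _
      show hS₁.exact.lift (k ≫ biprod.fst) hk1' ≫ (f₁ ≫ biprod.inl) = k
      rw [← Category.assoc, hl, ← htot]
    refine ⟨ShortComplex.mk (f₁ ≫ biprod.inl) φ hw, hSE, ⟨Iso.refl _⟩, ?_, hK⟩
    show T (Y ⊞ Sw.X₃)
    exact hT.2.2.1 _ (shortExact_biprod Y Sw.X₃) hY (hT.2.1 _ hQ)

lemma pdLE_X1_of_T_X3 (hT : IsResolving T) (S : ShortComplex C) (hS : S.ShortExact)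
    (h3 : T S.X₃) : ∀ {a : ℕ}, pdLE T a S.X₂ → pdLE T a S.X₁ := by
  intro a h
  haveI := hS.mono_f
  haveI := hS.epi_g
  match a, h with
  | 0, h => exact hT.2.2.2.1 S hS h h3
  | a + 1, h =>
    obtain ⟨K, Y, f₁, g₁, w₁, hS₁, hY, hK⟩ := exists_res h
    haveI : Epi g₁ := hS₁.epi_g
    have hA := shortExact_pullback (ShortComplex.mk f₁ g₁ w₁) hS₁ S.f
    have hB := shortExact_pullback' S hS g₁
    have hP : T (pullback g₁ S.f) := hT.2.2.2.1 _ hB hY h3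
    exact ⟨_, hA, ⟨Iso.refl _⟩, hP, hK⟩

variable [EnoughProjectives C]

lemma main (hT : IsResolving T) : ∀ n : ℕ,
    (∀ u v, u + v ≤ n → ∀ S : ShortComplex C, S.ShortExact →
        pdLE T u S.X₁ → pdLE T v S.X₂ → pdLE T (max v (u + 1)) S.X₃) ∧
    (∀ a b, a + b ≤ n → ∀ S : ShortComplex C, S.ShortExact →
        pdLE T a S.X₁ → pdLE T b S.X₃ → pdLE T (max a b) S.X₂) := by
  intro n
  induction n using Nat.strong_induction_on with
  | _ n ih =>
  have hE : ∀ u v, u + v ≤ n → ∀ S : ShortComplex C, S.ShortExact →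
      pdLE T u S.X₁ → pdLE T v S.X₂ → pdLE T (max v (u + 1)) S.X₃ := by
    intro u v hsum S hS h1 h2
    haveI := hS.mono_f
    haveI := hS.epi_g
    match v, h2 with
    | 0, h2 =>
      have hres : pdLE T (u + 1) S.X₃ := ⟨S, hS, ⟨Iso.refl _⟩, h2, h1⟩
      have heq : max 0 (u + 1) = u + 1 := by omega
      rw [heq]; exact hres
    | v + 1, h2 =>
      obtain ⟨K, Y, f₁, g₁, w₁, hS₁, hY, hK⟩ := exists_res h2
      haveI : Epi g₁ := hS₁.epi_g
      have hA := shortExact_pullback (ShortComplex.mk f₁ g₁ w₁) hS₁ S.f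
      have hB := shortExact_pullback' S hS g₁
      have hP : pdLE T (max v u) (pullback g₁ S.f) :=
        (ih (v + u) (by omega)).2 v u le_rfl _ hA hK h1
      have hres : pdLE T (max v u + 1) S.X₃ := ⟨_, hB, ⟨Iso.refl _⟩, hY, hP⟩
      have heq : max (v + 1) (u + 1) = max v u + 1 := by omega
      rw [heq]; exact hres
  refine ⟨hE, ?_⟩
  intro a b hsum S hS h1 h3
  haveI := hS.mono_f
  haveI := hS.epi_g
  match b, h3 with
  | 0, h3 =>
    match a, h1 with
    | 0, h1 =>
      have heq : max 0 0 = 0 := rfl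
      rw [heq]; exact hT.2.2.1 S hS h1 h3
    | a + 1, h1 =>
      have hW := shortExact_pullback S hS (Projective.π S.X₃)
      have hpdW : pdLE T (a + 1) (pullback S.g (Projective.π S.X₃)) :=
        pdLE_X2_of_projective_X3 hT _ hW (Projective.projective_over S.X₃) h1
      have hKer := shortExact_kernel (Projective.π S.X₃)
      have hR := shortExact_pullback
        (ShortComplex.mk (kernel.ι (Projective.π S.X₃)) (Projective.π S.X₃)
          (kernel.condition _)) hKer S.g
      have hTR : T (kernel (Projective.π S.X₃)) :=
        hT.2.2.2.1 _ hKer (hT.2.1 _ (Projective.projective_over S.X₃)) h3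
      have hpdW' : pdLE T (a + 1) (pullback (Projective.π S.X₃) S.g) :=
        pdLE_iso hT (pullbackSymmetry S.g (Projective.π S.X₃)) hpdW
      have hres := hE 0 (a + 1) (by omega) _ hR hTR hpdW'
      have heq : max (a + 1) 0 = max (a + 1) (0 + 1) := by omega
      rw [heq]; exact hres
  | b + 1, h3 =>
    obtain ⟨L, Z, f₂, g₂, w₂, hS₂, hZ, hL⟩ := exists_res h3
    haveI : Epi g₂ := hS₂.epi_g
    have hW₁ := shortExact_pullback S hS g₂
    have hpdW₁ : pdLE T a (pullback S.g g₂) := by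
      have h := (ih a (by omega)).2 a 0 (by omega) _ hW₁ h1 hZ
      have heq : max a 0 = a := by omega
      rwa [heq] at h
    have hW₂ := shortExact_pullback (ShortComplex.mk f₂ g₂ w₂) hS₂ S.g
    have hpdW₂ : pdLE T a (pullback g₂ S.g) :=
      pdLE_iso hT (pullbackSymmetry S.g g₂) hpdW₁
    exact hE b a (by omega) _ hW₂ hL hpdW₂

lemma pdLE_X1_le (hT : IsResolving T) (S : ShortComplex C) (hS : S.ShortExact) {a b : ℕ}
    (h2 : pdLE T a S.X₂) (h3 : pdLE T b S.X₃) : pdLE T (max a (b - 1)) S.X₁ := by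
  haveI := hS.mono_f
  haveI := hS.epi_g
  match b, h3 with
  | 0, h3 =>
    have h := pdLE_X1_of_T_X3 hT S hS h3 h2
    have heq : max a (0 - 1) = a := by omega
    rwa [heq]
  | b + 1, h3 =>
    obtain ⟨L, Z, f₂, g₂, w₂, hS₂, hZ, hL⟩ := exists_res h3
    haveI : Epi g₂ := hS₂.epi_g
    have hW₁ := shortExact_pullback S hS g₂
    have hW₂ := shortExact_pullback (ShortComplex.mk f₂ g₂ w₂) hS₂ S.g
    have hpdW₂ : pdLE T (max b a) (pullback g₂ S.g) :=
      (main hT (b + a)).2 b a le_rfl _ hW₂ hL h2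
    have hpdW₁ : pdLE T (max b a) (pullback S.g g₂) :=
      pdLE_iso hT (pullbackSymmetry g₂ S.g) hpdW₂
    have h := pdLE_X1_of_T_X3 hT _ hW₁ hZ hpdW₁
    have heq : max a (b + 1 - 1) = max b a := by omega
    rwa [heq]

end pdLE

section pd

variable {T : C → Prop}

lemma pd_le_coe {M : C} {k : ℕ} (h : pdLE T k M) : pd T M ≤ (k : ℕ∞) :=
  sInf_le ⟨k, rfl, h⟩

lemma pd_spec {M : C} (h : pd T M ≠ ⊤) : ∃ k : ℕ, pd T M = (k : ℕ∞) ∧ pdLE T k M := by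
  have hne : {n : ℕ∞ | ∃ k : ℕ, n = (k : ℕ∞) ∧ pdLE T k M}.Nonempty := by
    by_contra h'
    rw [Set.not_nonempty_iff_eq_empty] at h'
    exact h (by rw [pd, h', sInf_empty])
  obtain ⟨_, k₀, rfl, hk₀⟩ := hne
  have hS' : {k : ℕ | pdLE T k M}.Nonempty := ⟨k₀, hk₀⟩
  refine ⟨sInf {k : ℕ | pdLE T k M}, ?_, Nat.sInf_mem hS'⟩
  apply le_antisymm
  · exact pd_le_coe (Nat.sInf_mem hS')
  · apply le_sInf
    rintro n ⟨j, rfl, hj⟩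
    exact_mod_cast Nat.sInf_le hj

end pd

end RelHomDimAux

open RelHomDim in
/-- If `0 → A₁ → A₂ → A₃ → 0` is short exact and `T` is resolving, then
`T-pd A₁ ≤ max (T-pd A₂) (T-pd A₃ − 1)` (truncated subtraction in `ℕ∞`). -/
theorem pd_left_le_max {C : Type u} [Category.{v} C] [Abelian C] [EnoughProjectives C]
    (T : C → Prop) (hT : IsResolving T)
    (S : ShortComplex C) (hS : S.ShortExact) :
    pd T S.X₁ ≤ max (pd T S.X₂) (pd T S.X₃ - 1) := by
  by_cases h2 : pd T S.X₂ = ⊤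
  · rw [h2]
    exact le_trans le_top (le_max_left _ _)
  by_cases h3 : pd T S.X₃ = ⊤
  · rw [h3]
    have : (⊤ : ℕ∞) - 1 = ⊤ := rfl
    rw [this]
    exact le_trans le_top (le_max_right _ _)
  obtain ⟨m, hm, hm'⟩ := RelHomDimAux.pd_spec h2
  obtain ⟨k, hk, hk'⟩ := RelHomDimAux.pd_spec h3
  have h := RelHomDimAux.pdLE_X1_le hT S hS hm' hk'
  calc pd T S.X₁ ≤ ((max m (k - 1) : ℕ) : ℕ∞) := RelHomDimAux.pd_le_coe h
    _ ≤ max (pd T S.X₂) (pd T S.X₃ - 1) := by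
        have hsub : ((k - 1 : ℕ) : ℕ∞) = (k : ℕ∞) - 1 := by
          rw [ENat.coe_sub, Nat.cast_one]
        rw [hm, hk, ← hsub]
        exact_mod_cast le_rfl
end

section
/- Let T be a resolving subcategory of an abelian category A with enough projectives, and let 0 → A₁ → A₂ → A₃ → 0 be exact. If T-pd A₁ + 1 ≠ T-pd A₃, then T-pd A₂ = max{T-pd A₁, T-pd A₃}. -/
open CategoryTheory

universe v u

open CategoryTheory.Limits CategoryTheory.Abelian

section Helpers
variable {C : Type u} [Category.{v} C] [Abelian C]

/-- The split SES `X → X ⊞ Y → Y`. -/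
@[reducible] noncomputable def sesBiprod (X Y : C) : ShortComplex C :=
  ShortComplex.mk (biprod.inl : X ⟶ X ⊞ Y) (biprod.snd) biprod.inl_snd

lemma sesBiprod_shortExact (X Y : C) : (sesBiprod X Y).ShortExact where
  exact := ShortComplex.exact_of_f_is_kernel _ (biprod.isKernelSndKernelFork X Y)
  mono_f := by dsimp [sesBiprod]; infer_instance
  epi_g := by dsimp [sesBiprod]; infer_instance

@[reducible] noncomputable def sesKer {X Y : C} (f : X ⟶ Y) [Epi f] : ShortComplex C :=
  ShortComplex.mk (kernel.ι f) f (kernel.condition f)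

lemma sesKer_shortExact {X Y : C} (f : X ⟶ Y) [Epi f] : (sesKer f).ShortExact where
  exact := ShortComplex.exact_of_f_is_kernel _ (kernelIsKernel f)
  mono_f := by dsimp [sesKer]; infer_instance
  epi_g := by dsimp [sesKer]; infer_instance

noncomputable def sesKernelIso {S : ShortComplex C} (hS : S.ShortExact) : S.X₁ ≅ kernel S.g := by
  have := hS.mono_f
  refine ⟨kernel.lift S.g S.f S.zero,
    hS.fIsKernel.lift (KernelFork.ofι (kernel.ι S.g) (kernel.condition S.g)), ?_, ?_⟩
  · rw [← cancel_mono S.f]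
    have h2 := hS.fIsKernel.fac (KernelFork.ofι (kernel.ι S.g) (kernel.condition S.g))
      WalkingParallelPair.zero
    simp at h2
    simp [h2]
  · rw [← cancel_mono (kernel.ι S.g)]
    have h2 := hS.fIsKernel.fac (KernelFork.ofι (kernel.ι S.g) (kernel.condition S.g))
      WalkingParallelPair.zero
    simp at h2
    simp [h2]

@[simp] lemma sesKernelIso_hom_ι {S : ShortComplex C} (hS : S.ShortExact) :
    (sesKernelIso hS).hom ≫ kernel.ι S.g = S.f := by
  simp [sesKernelIso]

section Pseudo
attribute [local instance] Pseudoelement.objectToSort Pseudoelement.homToFun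
open Pseudoelement

lemma kernel_pseudo_exact {X Y : C} (f : X ⟶ Y) [Epi f] :
    ∀ b, Pseudoelement.pseudoApply f b = 0 →
      ∃ a, Pseudoelement.pseudoApply (kernel.ι f) a = b :=
  fun b hb => Pseudoelement.pseudo_exact_of_exact (S := sesKer f) (sesKer_shortExact f).exact b hb

/-- SES `kernel g → kernel (g ≫ f) → kernel f` for composable epis. -/
@[reducible] noncomputable def sesKerComp {A B D : C} (g : A ⟶ B) (f : B ⟶ D) [Epi g] : ShortComplex C :=
  ShortComplex.mk
    (kernel.lift (g ≫ f) (kernel.ι g) (by rw [← Category.assoc, kernel.condition, zero_comp]))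
    (kernel.lift f (kernel.ι (g ≫ f) ≫ g) (by rw [Category.assoc, kernel.condition]))
    (by
      rw [← cancel_mono (kernel.ι f)]
      simp only [Category.assoc, kernel.lift_ι, zero_comp]
      rw [← Category.assoc, kernel.lift_ι, kernel.condition])

lemma sesKerComp_shortExact {A B D : C} (g : A ⟶ B) (f : B ⟶ D) [Epi g] [Epi f] :
    (sesKerComp g f).ShortExact := by
  have hfac : (sesKerComp g f).f ≫ kernel.ι (g ≫ f) = kernel.ι g := by simp [sesKerComp]
  have gfac : (sesKerComp g f).g ≫ kernel.ι f = kernel.ι (g ≫ f) ≫ g := by simp [sesKerComp]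
  have hmono : Mono (sesKerComp g f).f := mono_of_mono_fac hfac
  have hepi : Epi (sesKerComp g f).g := by
    apply Pseudoelement.epi_of_pseudo_surjective
    intro c
    have h1 : pseudoApply f (pseudoApply (kernel.ι f) c) = 0 := by
      rw [← Pseudoelement.comp_apply, kernel.condition, Pseudoelement.zero_apply]
    obtain ⟨a, ha⟩ := Pseudoelement.pseudo_surjective_of_epi g (pseudoApply (kernel.ι f) c)
    have h2 : pseudoApply (g ≫ f) a = 0 := by rw [Pseudoelement.comp_apply, ha, h1]
    obtain ⟨a', ha'⟩ := kernel_pseudo_exact (g ≫ f) a h2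
    refine ⟨a', ?_⟩
    apply Pseudoelement.pseudo_injective_of_mono (kernel.ι f)
    rw [← Pseudoelement.comp_apply, gfac, Pseudoelement.comp_apply, ha', ha]
  refine { exact := ?_, mono_f := hmono, epi_g := hepi }
  apply Pseudoelement.exact_of_pseudo_exact
  intro m hm
  have h1 : pseudoApply g (pseudoApply (kernel.ι (g ≫ f)) m) = 0 := by
    rw [← Pseudoelement.comp_apply, ← gfac, Pseudoelement.comp_apply, hm,
      Pseudoelement.apply_zero]
  obtain ⟨y, hy⟩ := kernel_pseudo_exact g _ h1
  refine ⟨y, ?_⟩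
  apply Pseudoelement.pseudo_injective_of_mono (kernel.ι (g ≫ f))
  rw [← Pseudoelement.comp_apply, hfac, hy]
end Pseudo

/-- SES `kernel f → pullback f g → Y` when `f` is epi. -/
@[reducible] noncomputable def sesPullback {X Y Z : C} (f : X ⟶ Z) (g : Y ⟶ Z) [Epi f] : ShortComplex C :=
  ShortComplex.mk (pullback.lift (f := f) (g := g) (kernel.ι f) 0 (by simp)) (pullback.snd f g) (by simp [pullback.lift_snd])

lemma sesPullback_shortExact {X Y Z : C} (f : X ⟶ Z) (g : Y ⟶ Z) [Epi f] :
    (sesPullback f g).ShortExact := by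
  have hmono : Mono (sesPullback f g).f := by
    have : (sesPullback f g).f ≫ pullback.fst f g = kernel.ι f := by simp [sesPullback, pullback.lift_fst]
    exact mono_of_mono_fac this
  have hlim : IsLimit (KernelFork.ofι (sesPullback f g).f (sesPullback f g).zero) := by
    refine KernelFork.IsLimit.ofι _ _ (fun t ht => kernel.lift f (t ≫ pullback.fst f g) ?_)
      (fun t ht => ?_) (fun t ht m hm => ?_)
    · have ht' : t ≫ pullback.snd f g = 0 := ht
      rw [Category.assoc, pullback.condition, ← Category.assoc, ht', zero_comp]
    · have ht' : t ≫ pullback.snd f g = 0 := ht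
      apply pullback.hom_ext <;> simp [sesPullback, ht', pullback.lift_fst, pullback.lift_snd]
    · have ht' : t ≫ pullback.snd f g = 0 := ht
      rw [← cancel_mono (sesPullback f g).f]
      rw [hm]
      apply pullback.hom_ext <;> simp [sesPullback, ht', pullback.lift_fst, pullback.lift_snd]
  exact { exact := ShortComplex.exact_of_f_is_kernel _ hlim, mono_f := hmono,
          epi_g := by dsimp [sesPullback]; infer_instance }

section Horseshoe
variable {S : ShortComplex C} (hS : S.ShortExact) {P₁ P₃ : C}
  (p₁ : P₁ ⟶ S.X₁) (p₃ : P₃ ⟶ S.X₃) [Epi p₁] [Epi p₃] [Projective P₃]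

/-- The horseshoe epimorphism `P₁ ⊞ P₃ ⟶ X₂`. -/
noncomputable def hsK (hS : S.ShortExact) : P₁ ⊞ P₃ ⟶ S.X₂ :=
  letI := hS.epi_g
  biprod.desc (p₁ ≫ S.f) (Projective.factorThru p₃ S.g)

lemma hsK_comp_g : hsK p₁ p₃ hS ≫ S.g = biprod.snd ≫ p₃ := by
  haveI := hS.epi_g
  apply biprod.hom_ext' <;>
    simp [hsK, S.zero, Projective.factorThru_comp]

lemma hsK_epi : Epi (hsK p₁ p₃ hS) := by
  apply Abelian.epi_of_cokernel_π_eq_zero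
  have h1 : S.f ≫ cokernel.π (hsK p₁ p₃ hS) = 0 := by
    rw [← cancel_epi p₁, ← Category.assoc, comp_zero]
    have : p₁ ≫ S.f = biprod.inl ≫ hsK p₁ p₃ hS := by simp [hsK]
    rw [this, Category.assoc, cokernel.condition, comp_zero]
  obtain ⟨c', hc'⟩ := CokernelCofork.IsColimit.desc' hS.gIsCokernel _ h1
  simp only [Cofork.π_ofπ] at hc'
  have h2 : p₃ ≫ c' = 0 := by
    have h3 : biprod.inr ≫ hsK p₁ p₃ hS ≫ S.g = p₃ := by
      rw [hsK_comp_g]; simp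
    have h4 : (biprod.inr ≫ hsK p₁ p₃ hS ≫ S.g) ≫ c' = p₃ ≫ c' := by rw [h3]
    rw [← h4]
    simp only [Category.assoc]
    rw [hc', cokernel.condition, comp_zero]
  have hc0 : c' = 0 := by
    rw [← cancel_epi p₃, comp_zero]
    exact h2
  rw [← hc', hc0, comp_zero]
end Horseshoe

section Pseudo
attribute [local instance] Pseudoelement.objectToSort Pseudoelement.homToFun
open Pseudoelement

lemma kernel_pseudo_exact' {X Y : C} (f : X ⟶ Y) [Epi f] :
    ∀ b, Pseudoelement.pseudoApply f b = 0 →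
      ∃ a, Pseudoelement.pseudoApply (kernel.ι f) a = b :=
  fun b hb => Pseudoelement.pseudo_exact_of_exact (S := sesKer f) (sesKer_shortExact f).exact b hb

variable {S : ShortComplex C} (hS : S.ShortExact) {P₁ P₃ : C}
  (p₁ : P₁ ⟶ S.X₁) (p₃ : P₃ ⟶ S.X₃) [Epi p₁] [Epi p₃] [Projective P₃]

/-- The horseshoe SES of syzygies `ker p₁ → ker (hsK) → ker p₃`. -/
@[reducible] noncomputable def hsRow : ShortComplex C := by
  refine ShortComplex.mk
    (kernel.lift (hsK p₁ p₃ hS) (kernel.ι p₁ ≫ biprod.inl) ?_)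
    (kernel.lift p₃ (kernel.ι (hsK p₁ p₃ hS) ≫ biprod.snd) ?_)
    ?_
  · have h1 : biprod.inl ≫ hsK p₁ p₃ hS = p₁ ≫ S.f := by simp [hsK]
    rw [Category.assoc, h1, ← Category.assoc, kernel.condition, zero_comp]
  · have h1 : biprod.snd ≫ p₃ = hsK p₁ p₃ hS ≫ S.g := (hsK_comp_g hS p₁ p₃).symm
    rw [Category.assoc, h1, ← Category.assoc, kernel.condition, zero_comp]
  · rw [← cancel_mono (kernel.ι p₃)]
    simp only [Category.assoc, kernel.lift_ι, zero_comp]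
    rw [← Category.assoc, kernel.lift_ι]
    simp

lemma hsRow_shortExact : (hsRow hS p₁ p₃).ShortExact := by
  haveI := hS.mono_f
  haveI := hS.epi_g
  haveI := hsK_epi hS p₁ p₃
  have ffac : (hsRow hS p₁ p₃).f ≫ kernel.ι (hsK p₁ p₃ hS) = kernel.ι p₁ ≫ biprod.inl := by
    simp [hsRow]
  have gfac : (hsRow hS p₁ p₃).g ≫ kernel.ι p₃ = kernel.ι (hsK p₁ p₃ hS) ≫ biprod.snd := by
    simp [hsRow]
  have inlK : biprod.inl ≫ hsK p₁ p₃ hS = p₁ ≫ S.f := by simp [hsK]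
  have hmono : Mono (hsRow hS p₁ p₃).f := mono_of_mono_fac ffac
  have hepi : Epi (hsRow hS p₁ p₃).g := by
    apply Pseudoelement.epi_of_pseudo_surjective
    intro c
    -- x = inr (ι c)
    set x := pseudoApply (kernel.ι p₃ ≫ biprod.inr) c with hxdef
    have hgx : pseudoApply S.g (pseudoApply (hsK p₁ p₃ hS) x) = 0 := by
      rw [← Pseudoelement.comp_apply, ← Pseudoelement.comp_apply]
      have : (kernel.ι p₃ ≫ biprod.inr) ≫ hsK p₁ p₃ hS ≫ S.g = 0 := by
        rw [hsK_comp_g]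
        simp
      simp only [Category.assoc] at this ⊢
      rw [this, Pseudoelement.zero_apply]
    obtain ⟨a₁, ha₁⟩ := Pseudoelement.pseudo_exact_of_exact hS.exact _ hgx
    obtain ⟨w, hw⟩ := Pseudoelement.pseudo_surjective_of_epi p₁ a₁
    have hEq : pseudoApply (hsK p₁ p₃ hS) (pseudoApply biprod.inl w) =
        pseudoApply (hsK p₁ p₃ hS) x := by
      rw [← Pseudoelement.comp_apply, inlK, Pseudoelement.comp_apply, hw, ha₁]
    obtain ⟨z, hz0, hzprop⟩ := Pseudoelement.sub_of_eq_image _ _ _ hEq.symm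
    obtain ⟨u, hu⟩ := kernel_pseudo_exact' (hsK p₁ p₃ hS) z hz0
    refine ⟨u, ?_⟩
    apply Pseudoelement.pseudo_injective_of_mono (kernel.ι p₃)
    rw [← Pseudoelement.comp_apply, gfac, Pseudoelement.comp_apply, hu]
    have hsndinl : pseudoApply biprod.snd (pseudoApply (biprod.inl : P₁ ⟶ P₁ ⊞ P₃) w) = 0 := by
      rw [← Pseudoelement.comp_apply, biprod.inl_snd, Pseudoelement.zero_apply]
    have := hzprop _ (biprod.snd : P₁ ⊞ P₃ ⟶ P₃) hsndinl
    rw [this, hxdef, ← Pseudoelement.comp_apply, Category.assoc, biprod.inr_snd,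
      Category.comp_id]
  refine { exact := ?_, mono_f := hmono, epi_g := hepi }
  apply Pseudoelement.exact_of_pseudo_exact
  intro m hm
  have hsndx : pseudoApply biprod.snd (pseudoApply (kernel.ι (hsK p₁ p₃ hS)) m) = 0 := by
    rw [← Pseudoelement.comp_apply, ← gfac, Pseudoelement.comp_apply, hm,
      Pseudoelement.apply_zero]
  obtain ⟨w, hw⟩ := Pseudoelement.pseudo_exact_of_exact (sesBiprod_shortExact P₁ P₃).exact
    _ hsndx
  replace hw : pseudoApply (biprod.inl : P₁ ⟶ P₁ ⊞ P₃) w =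
    pseudoApply (kernel.ι (hsK p₁ p₃ hS)) m := hw
  have hp₁w : pseudoApply p₁ w = 0 := by
    apply Pseudoelement.pseudo_injective_of_mono S.f
    rw [Pseudoelement.apply_zero, ← Pseudoelement.comp_apply, ← inlK,
      Pseudoelement.comp_apply, hw, ← Pseudoelement.comp_apply, kernel.condition,
      Pseudoelement.zero_apply]
  obtain ⟨v, hv⟩ := kernel_pseudo_exact' p₁ w hp₁w
  refine ⟨v, ?_⟩
  apply Pseudoelement.pseudo_injective_of_mono (kernel.ι (hsK p₁ p₃ hS))
  rw [← Pseudoelement.comp_apply, ffac, Pseudoelement.comp_apply, hv, hw]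

end Pseudo

end Helpers

namespace RelHomDim
open ZeroObject
variable {C : Type u} [Category.{v} C] [Abelian C]

/-- The SES `0 → M → M`. -/
@[reducible] noncomputable def sesId (M : C) : ShortComplex C :=
  ShortComplex.mk (0 : (0 : C) ⟶ M) (𝟙 M) zero_comp

lemma sesId_shortExact (M : C) : (sesId M).ShortExact := by
  have hmono : Mono (sesId M).f :=
    ⟨fun u v _ => (Limits.isZero_zero C).eq_of_tgt u v⟩
  have hlim : IsLimit (KernelFork.ofι (sesId M).f (sesId M).zero) := by
    refine KernelFork.IsLimit.ofι _ _ (fun t ht => 0) (fun t ht => ?_) (fun t ht m hm => ?_)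
    · have : t = 0 := by simpa [sesId] using ht
      simp [this, sesId]
    · exact (Limits.isZero_zero C).eq_of_tgt m 0
  exact { exact := ShortComplex.exact_of_f_is_kernel _ hlim, mono_f := hmono,
          epi_g := by dsimp [sesId]; infer_instance }

variable {T : C → Prop} (hT : IsResolving T)
include hT

lemma T_iso {M N : C} (e : M ≅ N) (h : T M) : T N := hT.1 M N e h

lemma T_proj {P : C} (h : Projective P) : T P := hT.2.1 P h

lemma pdLE_iso {n : ℕ} {M N : C} (e : M ≅ N) (h : pdLE T n M) : pdLE T n N := by
  cases n with
  | zero => exact T_iso hT e h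
  | succ n =>
    obtain ⟨S, hse, ⟨e'⟩, h2, h1⟩ := h
    exact ⟨S, hse, ⟨e'.trans e⟩, h2, h1⟩

lemma pdLE_succ_of {n : ℕ} {M : C} (h : pdLE T n M) : pdLE T (n + 1) M := by
  induction n generalizing M with
  | zero =>
    exact ⟨sesId M, sesId_shortExact M, ⟨Iso.refl M⟩, h,
      T_proj hT (inferInstanceAs (Projective (0 : C)))⟩
  | succ n ih =>
    obtain ⟨S, hse, he, h2, h1⟩ := h
    exact ⟨S, hse, he, h2, ih h1⟩

lemma pdLE_of_le {m n : ℕ} {M : C} (hmn : m ≤ n) (h : pdLE T m M) : pdLE T n M := by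
  induction n, hmn using Nat.le_induction with
  | base => exact h
  | succ n hmn ih => exact pdLE_succ_of hT ih

lemma pdLE_of_T {n : ℕ} {M : C} (h : T M) : pdLE T n M :=
  pdLE_of_le hT (Nat.zero_le n) h

lemma pdLE_succ_iff {n : ℕ} {M : C} :
    pdLE T (n + 1) M ↔ ∃ (K E : C) (f : K ⟶ E) (g : E ⟶ M) (w : f ≫ g = 0),
      (ShortComplex.mk f g w).ShortExact ∧ T E ∧ pdLE T n K := by
  constructor
  · rintro ⟨S, hse, ⟨e⟩, h2, h1⟩
    haveI := hse.epi_g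
    haveI := hse.mono_f
    refine ⟨S.X₁, S.X₂, S.f, S.g ≫ e.hom, by rw [← Category.assoc, S.zero, zero_comp],
      ?_, h2, h1⟩
    have hex : (ShortComplex.mk S.f (S.g ≫ e.hom)
        (by rw [← Category.assoc, S.zero, zero_comp])).Exact := by
      apply Abelian.Pseudoelement.exact_of_pseudo_exact
      intro b hb
      have hb' : Abelian.Pseudoelement.pseudoApply S.g b = 0 := by
        apply Abelian.Pseudoelement.pseudo_injective_of_mono e.hom
        rw [Abelian.Pseudoelement.apply_zero, ← Abelian.Pseudoelement.comp_apply]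
        exact hb
      exact Abelian.Pseudoelement.pseudo_exact_of_exact hse.exact b hb'
    exact { exact := hex, mono_f := hse.mono_f, epi_g := epi_comp _ _ }
  · rintro ⟨K, E, f, g, w, hse, hTE, hK⟩
    exact ⟨_, hse, ⟨Iso.refl M⟩, hTE, hK⟩

/-- Kernels of epimorphisms onto `T`-objects preserve `pdLE`. -/
lemma pdLE_kernel : ∀ (n : ℕ) (S : ShortComplex C), S.ShortExact → T S.X₃ →
    pdLE T n S.X₂ → pdLE T n S.X₁ := by
  intro n
  induction n with
  | zero => exact fun S hS h3 h2 => hT.2.2.2.1 S hS h2 h3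
  | succ n ih =>
    intro S hS h3 h2
    haveI := hS.epi_g
    rw [pdLE_succ_iff hT] at h2
    obtain ⟨K, E, f, g, w, hse, hTE, hK⟩ := h2
    haveI := hse.epi_g
    have hgepi : Epi g := hse.epi_g
    -- the composite epi E ⟶ S.X₂ ⟶ S.X₃
    have hTL : T (kernel (g ≫ S.g)) := by
      haveI : Epi (g ≫ S.g) := epi_comp _ _
      exact hT.2.2.2.1 (sesKer (g ≫ S.g)) (sesKer_shortExact _) hTE h3
    haveI : Epi (g ≫ S.g) := epi_comp _ _
    refine ⟨sesKerComp g S.g, sesKerComp_shortExact g S.g,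
      ⟨(sesKernelIso hS).symm⟩, hTL, ?_⟩
    exact pdLE_iso hT (sesKernelIso hse) hK

variable [EnoughProjectives C]

lemma pdLE_shift_aux {n : ℕ}
    (hA : ∀ S : ShortComplex C, S.ShortExact → pdLE T n S.X₁ → pdLE T n S.X₃ →
      pdLE T n S.X₂)
    {M P : C} (p : P ⟶ M) [Epi p] (hP : T P) (h : pdLE T (n + 1) M) :
    pdLE T n (kernel p) := by
  rw [pdLE_succ_iff hT] at h
  obtain ⟨K, E, f, g, w, hse, hTE, hK⟩ := h
  haveI := hse.epi_g
  have h1 : pdLE T n (pullback g p) := by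
    apply hA (sesPullback g p) (sesPullback_shortExact g p)
    · exact pdLE_iso hT (sesKernelIso hse) hK
    · exact pdLE_of_T hT hP
  have h2 : pdLE T n (pullback p g) := pdLE_iso hT (pullbackSymmetry g p) h1
  exact pdLE_kernel hT n (sesPullback p g) (sesPullback_shortExact p g) hTE h2

/-- "Middle" of a SES: `pdLE n X₁ → pdLE n X₃ → pdLE n X₂`. -/
lemma pdLE_ext : ∀ (n : ℕ) (S : ShortComplex C), S.ShortExact →
    pdLE T n S.X₁ → pdLE T n S.X₃ → pdLE T n S.X₂ := by
  intro n
  induction n with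
  | zero => exact fun S hS h1 h3 => hT.2.2.1 S hS h1 h3
  | succ n ih =>
    intro S hS h1 h3
    haveI := hS.epi_g
    set p₁ := Projective.π S.X₁
    set p₃ := Projective.π S.X₃
    haveI := hsK_epi hS p₁ p₃
    have hk1 : pdLE T n (kernel p₁) :=
      pdLE_shift_aux hT ih p₁ (T_proj hT inferInstance) h1
    have hk3 : pdLE T n (kernel p₃) :=
      pdLE_shift_aux hT ih p₃ (T_proj hT inferInstance) h3
    have hk2 : pdLE T n (kernel (hsK p₁ p₃ hS)) :=
      ih (hsRow hS p₁ p₃) (hsRow_shortExact hS p₁ p₃) hk1 hk3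
    exact ⟨sesKer (hsK p₁ p₃ hS), sesKer_shortExact _, ⟨Iso.refl S.X₂⟩,
      T_proj hT (inferInstanceAs (Projective (Projective.over S.X₁ ⊞ Projective.over S.X₃))), hk2⟩

lemma pdLE_shift {n : ℕ} {M P : C} (p : P ⟶ M) [Epi p] (hP : T P)
    (h : pdLE T (n + 1) M) : pdLE T n (kernel p) :=
  pdLE_shift_aux hT (pdLE_ext hT n) p hP h

/-- "Sub" of a SES: `pdLE n X₂ → pdLE (n+1) X₃ → pdLE n X₁`. -/
lemma pdLE_sub : ∀ (n : ℕ) (S : ShortComplex C), S.ShortExact →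
    pdLE T n S.X₂ → pdLE T (n + 1) S.X₃ → pdLE T n S.X₁ := by
  intro n
  induction n with
  | zero =>
    intro S hS h2 h3
    haveI := hS.epi_g
    rw [pdLE_succ_iff hT] at h3
    obtain ⟨K, E, f, g, w, hse, hTE, hK⟩ := h3
    haveI := hse.epi_g
    have hTkg : T (kernel g) := T_iso hT (sesKernelIso hse) hK
    have hTW : T (pullback g S.g) :=
      hT.2.2.1 (sesPullback g S.g) (sesPullback_shortExact g S.g) hTkg h2
    have hTW' : T (pullback S.g g) := T_iso hT (pullbackSymmetry g S.g) hTW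
    have hker : T (kernel S.g) :=
      hT.2.2.2.1 (sesPullback S.g g) (sesPullback_shortExact S.g g) hTW' hTE
    exact T_iso hT (sesKernelIso hS).symm hker
  | succ n ih =>
    intro S hS h2 h3
    haveI := hS.epi_g
    set p₁ := Projective.π S.X₁
    set p₃ := Projective.π S.X₃
    haveI := hsK_epi hS p₁ p₃
    have hk2 : pdLE T n (kernel (hsK p₁ p₃ hS)) :=
      pdLE_shift hT (hsK p₁ p₃ hS) (T_proj hT inferInstance) h2
    have hk3 : pdLE T (n + 1) (kernel p₃) :=
      pdLE_shift hT p₃ (T_proj hT inferInstance) h3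
    have hk1 : pdLE T n (kernel p₁) :=
      ih (hsRow hS p₁ p₃) (hsRow_shortExact hS p₁ p₃) hk2 hk3
    exact ⟨sesKer p₁, sesKer_shortExact _, ⟨Iso.refl S.X₁⟩,
      T_proj hT (inferInstanceAs (Projective (Projective.over S.X₁))), hk1⟩

/-- "Cokernel" bound: `pdLE (n+1) X₂ → pdLE n X₁ → pdLE (n+1) X₃`. -/
lemma pdLE_coker (n : ℕ) (S : ShortComplex C) (hS : S.ShortExact)
    (h2 : pdLE T (n + 1) S.X₂) (h1 : pdLE T n S.X₁) : pdLE T (n + 1) S.X₃ := by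
  haveI := hS.epi_g
  set p₂ := Projective.π S.X₂
  haveI : Epi (p₂ ≫ S.g) := epi_comp _ _
  have hkp₂ : pdLE T n (kernel p₂) :=
    pdLE_shift hT p₂ (T_proj hT inferInstance) h2
  have hkg : pdLE T n (kernel S.g) := pdLE_iso hT (sesKernelIso hS) h1
  have hq : pdLE T n (kernel (p₂ ≫ S.g)) :=
    pdLE_ext hT n (sesKerComp p₂ S.g) (sesKerComp_shortExact p₂ S.g) hkp₂ hkg
  exact ⟨sesKer (p₂ ≫ S.g), sesKer_shortExact _, ⟨Iso.refl S.X₃⟩,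
    T_proj hT (inferInstanceAs (Projective (Projective.over S.X₂))), hq⟩




omit hT in
lemma exists_nat_cast {x : ℕ∞} (h : x ≠ ⊤) : ∃ n : ℕ, x = (n : ℕ∞) := by
  induction x using ENat.recTopCoe with
  | top => exact absurd rfl h
  | coe n => exact ⟨n, rfl⟩

lemma pd_le_iff {M : C} {n : ℕ} : pd T M ≤ (n : ℕ∞) ↔ pdLE T n M := by
  constructor
  · intro h
    by_contra hc
    have hlb : ∀ b ∈ {x : ℕ∞ | ∃ k : ℕ, x = (k : ℕ∞) ∧ pdLE T k M},
        ((n + 1 : ℕ) : ℕ∞) ≤ b := by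
      rintro b ⟨k, rfl, hk⟩
      rcases le_or_gt k n with hkn | hkn
      · exact absurd (pdLE_of_le hT hkn hk) hc
      · exact_mod_cast hkn
    have h2 : ((n + 1 : ℕ) : ℕ∞) ≤ pd T M := le_sInf hlb
    have h3 : ((n + 1 : ℕ) : ℕ∞) ≤ (n : ℕ∞) := h2.trans h
    rw [Nat.cast_le] at h3
    omega
  · intro h
    exact sInf_le ⟨n, rfl, h⟩

lemma pd_middle_le (S : ShortComplex C) (hS : S.ShortExact) :
    pd T S.X₂ ≤ max (pd T S.X₁) (pd T S.X₃) := by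
  by_cases h1 : pd T S.X₁ = ⊤
  · rw [h1]; simp
  by_cases h3 : pd T S.X₃ = ⊤
  · rw [h3]; simp
  obtain ⟨n₁, hn₁⟩ := exists_nat_cast h1
  obtain ⟨n₃, hn₃⟩ := exists_nat_cast h3
  have hp1 : pdLE T (max n₁ n₃) S.X₁ := by
    refine (pd_le_iff hT).1 ?_
    rw [hn₁]
    exact Nat.cast_le.2 (le_max_left n₁ n₃)
  have hp3 : pdLE T (max n₁ n₃) S.X₃ := by
    refine (pd_le_iff hT).1 ?_
    rw [hn₃]
    exact Nat.cast_le.2 (le_max_right n₁ n₃)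
  have hres := (pd_le_iff hT).2 (pdLE_ext hT (max n₁ n₃) S hS hp1 hp3)
  refine hres.trans ?_
  rw [hn₁, hn₃, ← Nat.mono_cast.map_max]

lemma pd_right_le (S : ShortComplex C) (hS : S.ShortExact) :
    pd T S.X₃ ≤ max (pd T S.X₂) (pd T S.X₁ + 1) := by
  by_cases h2 : pd T S.X₂ = ⊤
  · rw [h2]; simp
  by_cases h1 : pd T S.X₁ = ⊤
  · rw [h1]; simp [top_add]
  obtain ⟨n₂, hn₂⟩ := exists_nat_cast h2
  obtain ⟨n₁, hn₁⟩ := exists_nat_cast h1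
  have hle1 : n₂ - 1 ≤ max (n₂ - 1) n₁ := le_max_left _ _
  have hle2 : n₁ ≤ max (n₂ - 1) n₁ := le_max_right _ _
  have hp2 : pdLE T (max (n₂ - 1) n₁ + 1) S.X₂ := by
    refine (pd_le_iff hT).1 ?_
    rw [hn₂]
    exact Nat.cast_le.2 (by omega)
  have hp1 : pdLE T (max (n₂ - 1) n₁) S.X₁ := by
    refine (pd_le_iff hT).1 ?_
    rw [hn₁]
    exact Nat.cast_le.2 (by omega)
  have hres := (pd_le_iff hT).2 (pdLE_coker hT (max (n₂ - 1) n₁) S hS hp2 hp1)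
  refine hres.trans ?_
  rw [hn₁, hn₂]
  have hjeq : max (n₂ - 1) n₁ + 1 = max n₂ (n₁ + 1) := by
    rcases Nat.le_total n₂ (n₁ + 1) with hc | hc <;>
      rcases Nat.le_total (n₂ - 1) n₁ with hc' | hc' <;>
      simp [Nat.max_eq_left, Nat.max_eq_right, hc, hc'] <;> omega
  rw [hjeq, Nat.mono_cast.map_max, Nat.cast_add_one]

lemma pd_left_le (S : ShortComplex C) (hS : S.ShortExact) (n : ℕ)
    (h2 : pd T S.X₂ ≤ (n : ℕ∞)) (h3 : pd T S.X₃ ≤ ((n + 1 : ℕ) : ℕ∞)) :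
    pd T S.X₁ ≤ (n : ℕ∞) := by
  have hp2 := (pd_le_iff hT).1 h2
  have hp3 := (pd_le_iff hT).1 h3
  exact (pd_le_iff hT).2 (pdLE_sub hT n S hS hp2 hp3)

end RelHomDim

open RelHomDim in
/-- If `0 → A₁ → A₂ → A₃ → 0` is short exact, `T` is resolving and
`T-pd A₁ + 1 ≠ T-pd A₃`, then `T-pd A₂ = max (T-pd A₁) (T-pd A₃)`. -/
theorem pd_middle_eq_max {C : Type u} [Category.{v} C] [Abelian C] [EnoughProjectives C]
    (T : C → Prop) (hT : IsResolving T)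
    (S : ShortComplex C) (hS : S.ShortExact)
    (h : pd T S.X₁ + 1 ≠ pd T S.X₃) :
    pd T S.X₂ = max (pd T S.X₁) (pd T S.X₃) := by
  have ineq1 := pd_middle_le hT S hS
  have ineq3 := pd_right_le hT S hS
  rcases lt_trichotomy (pd T S.X₁ + 1) (pd T S.X₃) with hlt | heq | hgt
  · have hmax : max (pd T S.X₁) (pd T S.X₃) = pd T S.X₃ :=
      max_eq_right ((le_self_add : pd T S.X₁ ≤ pd T S.X₁ + 1).trans hlt.le)
    rw [hmax]
    refine le_antisymm (hmax ▸ ineq1) ?_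
    by_contra hc
    push_neg at hc
    exact absurd ineq3 (not_le.2 (max_lt hc hlt))
  · exact absurd heq h
  · -- pd X₃ < pd X₁ + 1, so pd X₃ ≤ pd X₁
    have hp3top : pd T S.X₃ ≠ ⊤ := by
      intro hp3
      rw [hp3] at hgt
      exact not_top_lt hgt
    have h31 : pd T S.X₃ ≤ pd T S.X₁ := by
      by_cases hp1 : pd T S.X₁ = ⊤
      · rw [hp1]; exact le_top
      · exact (ENat.lt_add_one_iff hp1).1 hgt
    have hmax : max (pd T S.X₁) (pd T S.X₃) = pd T S.X₁ := max_eq_left h31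
    rw [hmax]
    refine le_antisymm (hmax ▸ ineq1) ?_
    by_cases hp2 : pd T S.X₂ = ⊤
    · rw [hp2]; exact le_top
    obtain ⟨n₂, hn₂⟩ := exists_nat_cast hp2
    obtain ⟨t, ht⟩ := exists_nat_cast hp3top
    have hinit : pd T S.X₁ ≤ ((n₂ + t : ℕ) : ℕ∞) := by
      apply pd_left_le hT S hS
      · rw [hn₂]; exact Nat.cast_le.2 (by omega)
      · rw [ht]; exact Nat.cast_le.2 (by omega)
    have hdesc : ∀ d : ℕ, pd T S.X₁ ≤ ((n₂ + d : ℕ) : ℕ∞) → pd T S.X₁ ≤ (n₂ : ℕ∞) := by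
      intro d
      induction d with
      | zero => simpa using id
      | succ d ih =>
        intro hd
        apply ih
        apply pd_left_le hT S hS
        · rw [hn₂]; exact Nat.cast_le.2 (by omega)
        · refine h31.trans (hd.trans ?_)
          exact Nat.cast_le.2 (by omega)
    rw [hn₂]
    exact hdesc t hinit
end

section
/- Let T be a full additive subcategory of an abelian category A with enough projectives, containing all projective objects and closed under direct summands. If for every short exact sequence 0 → A₁ → A₂ → A₃ → 0 in A one has T-pd A₂ ≤ max{T-pd A₁, T-pd A₃} and T-pd A₁ ≤ max{T-pd A₂, T-pd A₃ − 1}, then T is resolving (closed under extensions and kernels of epimorphisms). -/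
open CategoryTheory

universe v u

open RelHomDim in
/-- Converse: if `T` is a full additive subcategory of an abelian category with
enough projectives, containing all projectives, closed under isomorphisms, direct
sums and direct summands, and for every short exact sequence
`0 → A₁ → A₂ → A₃ → 0` one has `T-pd A₂ ≤ max (T-pd A₁) (T-pd A₃)` and
`T-pd A₁ ≤ max (T-pd A₂) (T-pd A₃ − 1)`, then `T` is resolving, i.e. closed
under extensions and kernels of epimorphisms. -/
theorem isResolving_of_pd_ineqs {C : Type u} [Category.{v} C] [Abelian C]
    [EnoughProjectives C] (T : C → Prop)
    (hiso : ∀ X Y : C, (X ≅ Y) → T X → T Y)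
    (hproj : ∀ P : C, Projective P → T P)
    (hsum : ∀ X Y : C, T X → T Y → T (X ⊞ Y))
    (hsummand : ∀ X Y : C, T (X ⊞ Y) → T X)
    (hineq₁ : ∀ S : ShortComplex C, S.ShortExact →
      pd T S.X₂ ≤ max (pd T S.X₁) (pd T S.X₃))
    (hineq₂ : ∀ S : ShortComplex C, S.ShortExact →
      pd T S.X₁ ≤ max (pd T S.X₂) (pd T S.X₃ - 1)) :
    (∀ S : ShortComplex C, S.ShortExact → T S.X₁ → T S.X₃ → T S.X₂) ∧
    (∀ S : ShortComplex C, S.ShortExact → T S.X₂ → T S.X₃ → T S.X₁) := by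
  have h0 : ∀ M : C, T M → pd T M = 0 := fun M hM =>
    le_antisymm (sInf_le ⟨0, rfl, hM⟩) zero_le
  have h1 : ∀ M : C, pd T M = 0 → T M := by
    intro M h
    by_contra hM
    have hge : (1 : ℕ∞) ≤ pd T M := by
      refine le_sInf fun n hn => ?_
      obtain ⟨k, rfl, hk⟩ := hn
      cases k with
      | zero => exact absurd hk hM
      | succ k => exact_mod_cast Nat.succ_le_succ (Nat.zero_le k)
    rw [h] at hge
    exact absurd hge (by simp)
  constructor
  · intro S hS hT1 hT3
    have := hineq₁ S hS
    rw [h0 _ hT1, h0 _ hT3] at this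
    simp only [max_self] at this
    exact h1 _ (le_antisymm this zero_le)
  · intro S hS hT2 hT3
    have := hineq₂ S hS
    rw [h0 _ hT2, h0 _ hT3] at this
    simp only [zero_tsub, max_self] at this
    exact h1 _ (le_antisymm this zero_le)
end

section
/- Let A be an abelian category with enough projectives, T a resolving subcategory, M an object, and n ≥ 0. If there exists one exact sequence 0 → Kₙ → P_{n−1} → ⋯ → P₀ → M → 0 with all Pᵢ projective and Kₙ ∈ T, then for every exact sequence 0 → K'ₙ → T_{n−1} → ⋯ → T₀ → M → 0 with all Tᵢ ∈ T, one has K'ₙ ∈ T. -/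
open CategoryTheory

universe v u

namespace RelHomDim

variable {C : Type u} [Category.{v} C] [Abelian C]

/-- `isSyzygyOfLength Q n K M` means there is an exact sequence
`0 → K → X_{n-1} → ⋯ → X₀ → M → 0` where all the middle terms `Xᵢ` satisfy `Q`
(for `n = 0` this just means `K ≅ M`). -/
def isSyzygyOfLength (Q : C → Prop) : ℕ → C → C → Prop
  | 0, K, M => Nonempty (K ≅ M)
  | n + 1, K, M => ∃ S : ShortComplex C, S.ShortExact ∧ Nonempty (S.X₃ ≅ M) ∧
      Q S.X₂ ∧ isSyzygyOfLength Q n K S.X₁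

end RelHomDim

namespace RelHomDim

open CategoryTheory.Limits

variable {C : Type u} [Category.{v} C] [Abelian C]

lemma syz_zero_iff {Q : C → Prop} {K M : C} :
    isSyzygyOfLength Q 0 K M ↔ Nonempty (K ≅ M) := Iff.rfl

lemma syz_succ_iff {Q : C → Prop} {n : ℕ} {K M : C} :
    isSyzygyOfLength Q (n + 1) K M ↔ ∃ S : ShortComplex C, S.ShortExact ∧
      Nonempty (S.X₃ ≅ M) ∧ Q S.X₂ ∧ isSyzygyOfLength Q n K S.X₁ := Iff.rfl

lemma syz_iso_target {Q : C → Prop} {n : ℕ} {K M M' : C}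
    (h : isSyzygyOfLength Q n K M) (e : M ≅ M') : isSyzygyOfLength Q n K M' := by
  cases n with
  | zero => obtain ⟨e0⟩ := h; exact ⟨e0.trans e⟩
  | succ m =>
    obtain ⟨S, hS, ⟨e3⟩, hQ, hrest⟩ := h
    exact ⟨S, hS, ⟨e3.trans e⟩, hQ, hrest⟩

lemma syz_mono {Q Q' : C → Prop} (hQQ : ∀ X, Q X → Q' X) : ∀ {n : ℕ} {K M : C},
    isSyzygyOfLength Q n K M → isSyzygyOfLength Q' n K M := by
  intro n
  induction n with
  | zero => intro K M h; exact h
  | succ m ih =>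
    intro K M h
    obtain ⟨S, hS, h3, hQ2, hrest⟩ := h
    exact ⟨S, hS, h3, hQQ _ hQ2, ih hrest⟩

lemma mem_of_syz {T : C → Prop} (hT : IsResolving T) : ∀ {n : ℕ} {K M : C},
    T M → isSyzygyOfLength T n K M → T K := by
  intro n
  induction n with
  | zero => intro K M hM ⟨e⟩; exact hT.1 M K e.symm hM
  | succ m ih =>
    intro K M hM h
    obtain ⟨S, hS, ⟨e3⟩, hX2, hrest⟩ := h
    have hX3 : T S.X₃ := hT.1 M S.X₃ e3.symm hM
    exact ih (hT.2.2.2.1 S hS hX2 hX3) hrest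

lemma exists_proj_syz [EnoughProjectives C] : ∀ (n : ℕ) (M : C),
    ∃ K : C, isSyzygyOfLength (fun P => Projective P) n K M := by
  intro n
  induction n with
  | zero => intro M; exact ⟨M, ⟨Iso.refl M⟩⟩
  | succ m ih =>
    intro M
    let S : ShortComplex C := ShortComplex.mk (kernel.ι (Projective.π M)) (Projective.π M)
      (kernel.condition _)
    have hS : S.ShortExact := ⟨S.exact_of_f_is_kernel (kernelIsKernel _)⟩
    obtain ⟨K, hK⟩ := ih S.X₁
    exact ⟨K, S, hS, ⟨Iso.refl M⟩, Projective.projective_over M, hK⟩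

lemma biprod_mem {T : C → Prop} (hT : IsResolving T) {X Y : C} (hX : T X) (hY : T Y) :
    T (X ⊞ Y) :=
  hT.2.2.1 _ (ShortComplex.Splitting.ofHasBinaryBiproduct X Y).shortExact hX hY

lemma shortExact_of_isKernel {X Y Z : C} (f : X ⟶ Y) (g : Y ⟶ Z) (w : f ≫ g = 0)
    (hm : Mono f) (he : Epi g)
    (hker : ∀ ⦃W : C⦄ (t : W ⟶ Y), t ≫ g = 0 → ∃ l : W ⟶ X, l ≫ f = t) :
    (ShortComplex.mk f g w).ShortExact := by
  haveI := hm
  haveI := he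
  exact ShortComplex.ShortExact.mk'
    ((ShortComplex.mk f g w).exact_of_f_is_kernel (KernelFork.IsLimit.ofι f w
      (fun t ht => (hker t ht).choose)
      (fun t ht => (hker t ht).choose_spec)
      (fun t ht b hb => hm.right_cancellation _ _
        (by rw [hb, (hker t ht).choose_spec]))))
    hm he

lemma shortExact_postcomp {S : ShortComplex C} (hS : S.ShortExact) {X₃' : C} (e : S.X₃ ≅ X₃') :
    (ShortComplex.mk S.f (S.g ≫ e.hom)
      (by rw [← Category.assoc, S.zero, zero_comp])).ShortExact :=
  ShortComplex.shortExact_of_iso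
    (ShortComplex.isoMk (Iso.refl S.X₁) (Iso.refl S.X₂) e (by simp) (by simp)) hS

end RelHomDim

namespace RelHomDim

open CategoryTheory.Limits

variable {C : Type u} [Category.{v} C] [Abelian C]

lemma syz_pad {T : C → Prop} (hT : IsResolving T) {P : C} (hP : T P) {m : ℕ} {K A : C}
    (h : isSyzygyOfLength T (m + 1) K A) : isSyzygyOfLength T (m + 1) K (A ⊞ P) := by
  obtain ⟨S, hS, ⟨e⟩, hX2, hrest⟩ := h
  haveI : Mono S.f := hS.mono_f
  haveI : Epi S.g := hS.epi_g
  refine ⟨ShortComplex.mk (S.f ≫ biprod.inl) (biprod.map S.g (𝟙 P))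
    (by rw [Category.assoc, biprod.inl_map, ← Category.assoc, S.zero, zero_comp]),
    ?_, ⟨(biprod.mapIso e (Iso.refl P) : S.X₃ ⊞ P ≅ A ⊞ P)⟩, biprod_mem hT hX2 hP, hrest⟩
  refine shortExact_of_isKernel _ _ _ (mono_comp _ _) inferInstance ?_
  intro W t ht
  have h1 : (t ≫ biprod.fst) ≫ S.g = 0 := by
    have := ht =≫ biprod.fst
    simpa [biprod.map_fst] using this
  have h2 : t ≫ biprod.snd = 0 := by
    have := ht =≫ biprod.snd
    simpa [biprod.map_snd] using this
  refine ⟨hS.exact.lift (t ≫ biprod.fst) h1, ?_⟩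
  apply biprod.hom_ext
  · simpa using hS.exact.lift_f (t ≫ biprod.fst) h1
  · simpa using h2.symm

lemma pullback_biprod_shortExact {A T₀ A₀ P M : C}
    {f : A ⟶ T₀} {g : T₀ ⟶ M} {w : f ≫ g = 0} (hS : (ShortComplex.mk f g w).ShortExact)
    {f' : A₀ ⟶ P} {g' : P ⟶ M} {w' : f' ≫ g' = 0} (hS' : (ShortComplex.mk f' g' w').ShortExact)
    (hP : Projective P) :
    ∃ (j : A₀ ⟶ A ⊞ P) (ψ : A ⊞ P ⟶ T₀) (wj : j ≫ ψ = 0),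
      (ShortComplex.mk j ψ wj).ShortExact := by
  haveI := hP
  haveI : Mono f := hS.mono_f
  haveI : Epi g := hS.epi_g
  haveI : Mono f' := hS'.mono_f
  haveI : Epi g' := hS'.epi_g
  obtain ⟨h, hh⟩ : ∃ h : P ⟶ T₀, h ≫ g = g' :=
    ⟨Projective.factorThru g' g, Projective.factorThru_comp _ _⟩
  have hb0 : (f' ≫ h) ≫ g = 0 := by rw [Category.assoc, hh, w']
  obtain ⟨b, hbf⟩ : ∃ b : A₀ ⟶ A, b ≫ f = f' ≫ h := ⟨_, hS.exact.lift_f (f' ≫ h) hb0⟩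
  have wj : biprod.lift (-b) f' ≫ biprod.desc f h = 0 := by
    rw [biprod.lift_desc, Preadditive.neg_comp, hbf, neg_add_cancel]
  have descEq : biprod.desc f h = biprod.fst ≫ f + biprod.snd ≫ h := by
    apply biprod.hom_ext' <;> simp
  have heψ : Epi (biprod.desc f h) := by
    apply Preadditive.epi_of_cancel_zero
    intro W c hc
    have h1 : f ≫ c = 0 := by
      have := biprod.inl ≫= hc
      simpa using this
    have h3 : h ≫ c = 0 := by
      have := biprod.inr ≫= hc
      simpa using this
    have h4 : g ≫ hS.exact.desc c h1 = c := hS.exact.g_desc _ _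
    have h5 : g' ≫ hS.exact.desc c h1 = 0 := by
      rw [← hh, Category.assoc, h4, h3]
    have h6 : hS.exact.desc c h1 = 0 := by
      rw [← cancel_epi g', h5, comp_zero]
    rw [← h4, h6, comp_zero]
  refine ⟨_, _, wj, shortExact_of_isKernel _ _ wj inferInstance heψ ?_⟩
  intro W t ht
  have ht' : t ≫ biprod.fst ≫ f + t ≫ biprod.snd ≫ h = 0 := by
    rw [descEq] at ht
    simpa [Preadditive.comp_add] using ht
  have h2g : (t ≫ biprod.snd) ≫ g' = 0 := by
    have h0 : (t ≫ biprod.fst ≫ f + t ≫ biprod.snd ≫ h) ≫ g = 0 := by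
      rw [ht', zero_comp]
    simpa [Preadditive.add_comp, Category.assoc, w, hh] using h0
  obtain ⟨l, hlf⟩ : ∃ l : W ⟶ A₀, l ≫ f' = t ≫ biprod.snd :=
    ⟨_, hS'.exact.lift_f (t ≫ biprod.snd) h2g⟩
  refine ⟨l, ?_⟩
  apply biprod.hom_ext
  · have h7 : (t ≫ biprod.fst + l ≫ b) ≫ f = 0 := by
      simp only [Preadditive.add_comp, Category.assoc, hbf]
      rw [← Category.assoc l f' h, hlf, Category.assoc, ht']
    have h8 : t ≫ biprod.fst + l ≫ b = 0 := zero_of_comp_mono f h7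
    have h9 : t ≫ biprod.fst = -(l ≫ b) := eq_neg_of_add_eq_zero_left h8
    simp [h9]
  · simp [hlf]

end RelHomDim

namespace RelHomDim

open CategoryTheory.Limits

variable {C : Type u} [Category.{v} C] [Abelian C]

lemma horseshoe_step [EnoughProjectives C] {X₁ X₂ X₃ A P Cc Q : C}
    {f : X₁ ⟶ X₂} {g : X₂ ⟶ X₃} {w : f ≫ g = 0} (hS : (ShortComplex.mk f g w).ShortExact)
    {f₁ : A ⟶ P} {g₁ : P ⟶ X₁} {w₁ : f₁ ≫ g₁ = 0} (hS₁ : (ShortComplex.mk f₁ g₁ w₁).ShortExact)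
    {f₃ : Cc ⟶ Q} {g₃ : Q ⟶ X₃} {w₃ : f₃ ≫ g₃ = 0} (hS₃ : (ShortComplex.mk f₃ g₃ w₃).ShortExact)
    (hP : Projective P) (hQ : Projective Q) :
    ∃ (B : C) (ι : B ⟶ P ⊞ Q) (φ : P ⊞ Q ⟶ X₂) (wφ : ι ≫ φ = 0)
      (α : A ⟶ B) (β : B ⟶ Cc) (wβ : α ≫ β = 0),
      (ShortComplex.mk ι φ wφ).ShortExact ∧ (ShortComplex.mk α β wβ).ShortExact := by
  haveI := hP; haveI := hQ
  haveI : Mono f := hS.mono_f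
  haveI : Epi g := hS.epi_g
  haveI : Mono f₁ := hS₁.mono_f
  haveI : Epi g₁ := hS₁.epi_g
  haveI : Mono f₃ := hS₃.mono_f
  haveI : Epi g₃ := hS₃.epi_g
  obtain ⟨q, hq⟩ : ∃ q : Q ⟶ X₂, q ≫ g = g₃ :=
    ⟨Projective.factorThru g₃ g, Projective.factorThru_comp _ _⟩
  set φ : P ⊞ Q ⟶ X₂ := biprod.desc (g₁ ≫ f) q with hφdef
  have hinlφ : biprod.inl ≫ φ = g₁ ≫ f := biprod.inl_desc _ _
  have hinrφ : biprod.inr ≫ φ = q := biprod.inr_desc _ _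
  have descEq : φ = biprod.fst ≫ (g₁ ≫ f) + biprod.snd ≫ q := by
    apply biprod.hom_ext' <;> simp [hφdef]
  -- φ is epi
  have heφ : Epi φ := by
    apply Preadditive.epi_of_cancel_zero
    intro W c hc
    have h1 : g₁ ≫ f ≫ c = 0 := by
      have := biprod.inl ≫= hc
      simpa [hφdef] using this
    have h1' : f ≫ c = 0 := by
      rw [← cancel_epi g₁, h1, comp_zero]
    have h2 : q ≫ c = 0 := by
      have := biprod.inr ≫= hc
      simpa [hφdef] using this
    have h4 : g ≫ hS.exact.desc c h1' = c := hS.exact.g_desc _ _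
    have h5 : g₃ ≫ hS.exact.desc c h1' = 0 := by
      rw [← hq, Category.assoc, h4, h2]
    have h6 : hS.exact.desc c h1' = 0 := by
      rw [← cancel_epi g₃, h5, comp_zero]
    rw [← h4, h6, comp_zero]
  -- the first short exact sequence
  have hSE1 : (ShortComplex.mk (kernel.ι φ) φ (kernel.condition φ)).ShortExact := by
    refine shortExact_of_isKernel _ _ _ inferInstance heφ ?_
    intro W t ht
    exact ⟨kernel.lift φ t ht, kernel.lift_ι _ _ _⟩
  -- the map α
  have hα0 : (f₁ ≫ biprod.inl) ≫ φ = 0 := by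
    rw [Category.assoc, hinlφ, ← Category.assoc, w₁, zero_comp]
  set α : A ⟶ kernel φ := kernel.lift φ (f₁ ≫ biprod.inl) hα0 with hαdef
  have hαι : α ≫ kernel.ι φ = f₁ ≫ biprod.inl := kernel.lift_ι _ _ _
  -- the map β
  have hβ0 : (kernel.ι φ ≫ biprod.snd) ≫ g₃ = 0 := by
    have h0 : (kernel.ι φ ≫ (biprod.fst ≫ (g₁ ≫ f) + biprod.snd ≫ q)) ≫ g = 0 := by
      rw [← descEq, kernel.condition, zero_comp]
    simpa [Preadditive.comp_add, Preadditive.add_comp, Category.assoc, w, hq] using h0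
  set β : kernel φ ⟶ Cc := hS₃.exact.lift (kernel.ι φ ≫ biprod.snd) hβ0 with hβdef
  have hβf : β ≫ f₃ = kernel.ι φ ≫ biprod.snd := hS₃.exact.lift_f _ _
  have wβ : α ≫ β = 0 := by
    rw [← cancel_mono f₃, Category.assoc, hβf, ← Category.assoc, hαι, zero_comp,
      Category.assoc, biprod.inl_snd, comp_zero]
  -- α is mono
  haveI hmono : Mono (f₁ ≫ (biprod.inl : P ⟶ P ⊞ Q)) := mono_comp _ _
  have hmα : Mono α := mono_of_mono_fac hαι
  -- β is epi
  have heβ : Epi β := by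
    set R := Projective.over Cc
    set π : R ⟶ Cc := Projective.π Cc
    have hmg : ((π ≫ f₃) ≫ q) ≫ g = 0 := by
      rw [Category.assoc, hq, Category.assoc, w₃, comp_zero]
    set u : R ⟶ X₁ := hS.exact.lift ((π ≫ f₃) ≫ q) hmg with hudef
    have hu : u ≫ f = (π ≫ f₃) ≫ q := hS.exact.lift_f _ _
    obtain ⟨v, hv⟩ : ∃ v : R ⟶ P, v ≫ g₁ = u :=
      ⟨Projective.factorThru u g₁, Projective.factorThru_comp _ _⟩
    have hwφ : biprod.lift (-v) (π ≫ f₃) ≫ φ = 0 := by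
      rw [hφdef, biprod.lift_desc, Preadditive.neg_comp, ← Category.assoc, hv, hu]
      exact neg_add_cancel _
    set wHat : R ⟶ kernel φ := kernel.lift φ _ hwφ with hwHatdef
    have hwHatι : wHat ≫ kernel.ι φ = biprod.lift (-v) (π ≫ f₃) := kernel.lift_ι _ _ _
    have hwHatβ : wHat ≫ β = π := by
      rw [← cancel_mono f₃, Category.assoc, hβf, ← Category.assoc, hwHatι, biprod.lift_snd]
    exact epi_of_epi_fac hwHatβ
  -- exactness at B : α is a kernel of β
  have hSE2 : (ShortComplex.mk α β wβ).ShortExact := by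
    refine shortExact_of_isKernel _ _ _ hmα heβ ?_
    intro W t ht
    have h1 : (t ≫ kernel.ι φ) ≫ biprod.snd = 0 := by
      rw [Category.assoc, ← hβf, ← Category.assoc, ht, zero_comp]
    have h2 : t ≫ kernel.ι φ = ((t ≫ kernel.ι φ) ≫ biprod.fst) ≫ biprod.inl := by
      apply biprod.hom_ext
      · simp
      · simpa using h1
    have h3 : (((t ≫ kernel.ι φ) ≫ biprod.fst) ≫ g₁) ≫ f = 0 := by
      have : (((t ≫ kernel.ι φ) ≫ biprod.fst) ≫ biprod.inl) ≫ φ = 0 := by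
        rw [← h2, Category.assoc, kernel.condition, comp_zero]
      rw [Category.assoc, Category.assoc] at this ⊢
      rwa [hinlφ] at this
    have h4 : ((t ≫ kernel.ι φ) ≫ biprod.fst) ≫ g₁ = 0 := zero_of_comp_mono f h3
    refine ⟨hS₁.exact.lift _ h4, ?_⟩
    rw [← cancel_mono (kernel.ι φ), Category.assoc, hαι, ← Category.assoc,
      hS₁.exact.lift_f, h2]
    simp [Category.assoc]
  exact ⟨kernel φ, kernel.ι φ, φ, kernel.condition φ, α, β, wβ, hSE1, hSE2⟩

lemma horseshoe [EnoughProjectives C] : ∀ (n : ℕ) (S : ShortComplex C), S.ShortExact →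
    ∀ (K L : C), isSyzygyOfLength (fun P => Projective P) n K S.X₁ →
      isSyzygyOfLength (fun P => Projective P) n L S.X₃ →
      ∃ S₂ : ShortComplex C, S₂.ShortExact ∧ Nonempty (S₂.X₁ ≅ K) ∧ Nonempty (S₂.X₃ ≅ L) ∧
        isSyzygyOfLength (fun P => Projective P) n S₂.X₂ S.X₂ := by
  intro n
  induction n with
  | zero =>
    intro S hS K L h1 h3
    obtain ⟨e1⟩ := h1
    obtain ⟨e3⟩ := h3
    exact ⟨S, hS, ⟨e1.symm⟩, ⟨e3.symm⟩, ⟨Iso.refl _⟩⟩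
  | succ m ih =>
    intro S hS K L hK hL
    obtain ⟨S₁, hS₁, ⟨e₁⟩, hP, hK'⟩ := hK
    obtain ⟨S₃, hS₃, ⟨e₃⟩, hQ, hL'⟩ := hL
    obtain ⟨B, ι, φ, wφ, α, β, wβ, hSE1, hSE2⟩ :=
      horseshoe_step hS (shortExact_postcomp hS₁ e₁) (shortExact_postcomp hS₃ e₃) hP hQ
    obtain ⟨S₂, hS₂, hX1, hX3, hmid⟩ := ih (ShortComplex.mk α β wβ) hSE2 K L hK' hL'
    refine ⟨S₂, hS₂, hX1, hX3, ?_⟩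
    haveI := hP; haveI := hQ
    exact ⟨ShortComplex.mk ι φ wφ, hSE1, ⟨Iso.refl _⟩,
      (inferInstance : Projective (S₁.X₂ ⊞ S₃.X₂)), hmid⟩

end RelHomDim


open RelHomDim in
/-- For `T` resolving: if there is one exact sequence
`0 → Kₙ → P_{n-1} → ⋯ → P₀ → M → 0` with all `Pᵢ` projective and `Kₙ ∈ T`, then
for every exact sequence `0 → K'ₙ → T_{n-1} → ⋯ → T₀ → M → 0` with all `Tᵢ ∈ T`
one has `K'ₙ ∈ T`. -/
theorem syzygy_mem_of_exists_syzygy_mem {C : Type u} [Category.{v} C] [Abelian C]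
    [EnoughProjectives C] (T : C → Prop) (hT : IsResolving T)
    (M : C) (n : ℕ)
    (h : ∃ K : C, isSyzygyOfLength (fun P => Projective P) n K M ∧ T K) :
    ∀ K' : C, isSyzygyOfLength T n K' M → T K' := by
  induction n generalizing M with
  | zero =>
    obtain ⟨K, hKsyz, hK⟩ := h
    rw [syz_zero_iff] at hKsyz
    obtain ⟨e⟩ := hKsyz
    intro K' hK'
    rw [syz_zero_iff] at hK'
    obtain ⟨e'⟩ := hK'
    exact hT.1 M K' e'.symm (hT.1 K M e hK)
  | succ m ih =>
    obtain ⟨K, hKsyz, hTK⟩ := h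
    rw [syz_succ_iff] at hKsyz
    obtain ⟨Sp, hSp, ⟨ep⟩, hPp, hKsyz'⟩ := hKsyz
    intro K' hK'
    rw [syz_succ_iff] at hK'
    obtain ⟨St, hSt, ⟨et⟩, hTt, hK'syz⟩ := hK'
    obtain ⟨j, ψ, wj, hSE2⟩ :=
      pullback_biprod_shortExact (shortExact_postcomp hSt et) (shortExact_postcomp hSp ep) hPp
    obtain ⟨L, hL⟩ := exists_proj_syz m St.X₂
    have hTL : T L := mem_of_syz hT hTt (syz_mono (fun X hX => hT.2.1 X hX) hL)
    obtain ⟨S₂, hS₂, ⟨eK⟩, ⟨eL⟩, hNsyz⟩ :=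
      horseshoe m (ShortComplex.mk j ψ wj) hSE2 K L hKsyz' hL
    have hTN : T S₂.X₂ := hT.2.2.1 S₂ hS₂ (hT.1 K S₂.X₁ eK.symm hTK) (hT.1 L S₂.X₃ eL.symm hTL)
    cases m with
    | zero =>
      rw [syz_zero_iff] at hNsyz hK'syz
      obtain ⟨eN⟩ := hNsyz
      obtain ⟨eK'⟩ := hK'syz
      have hAP : T (St.X₁ ⊞ Sp.X₂) := hT.1 _ _ eN hTN
      exact hT.1 St.X₁ K' eK'.symm (hT.2.2.2.2 St.X₁ Sp.X₂ hAP)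
    | succ k =>
      exact ih (St.X₁ ⊞ Sp.X₂) ⟨S₂.X₂, hNsyz, hTN⟩ K' (syz_pad hT (hT.2.1 _ hPp) hK'syz)
end

section
/- Let (U, V) be a hereditary cotorsion pair in the category of left R-modules with kernel C = U ∩ V. Then for any left R-module M with finite C-projective dimension, the U-projective dimension of M equals the C-projective dimension of M. -/
open CategoryTheory

universe v u

universe w

namespace CotorsionAux

open CategoryTheory Abelian RelHomDim Limits

universe w' v' u'

section General

variable {A : Type u'} [Category.{v'} A] [Abelian A] [HasExt.{w'} A]

lemma subsingleton_of_forall_eq_zero {X Y : A} {n : ℕ}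
    (h : ∀ x : Ext X Y n, x = 0) : Subsingleton (Ext X Y n) :=
  ⟨fun a b => by rw [h a, h b]⟩

lemma ext_sub_left {X X' Y : A} (e : X ≅ X') {n : ℕ}
    (h : Subsingleton (Ext X Y n)) : Subsingleton (Ext X' Y n) := by
  apply subsingleton_of_forall_eq_zero
  intro x
  have h1 : (Ext.mk₀ e.hom).comp x (zero_add n) = 0 := Subsingleton.elim _ _
  calc x = (Ext.mk₀ (𝟙 X')).comp x (zero_add n) := (Ext.mk₀_id_comp x).symm
    _ = (Ext.mk₀ (e.inv ≫ e.hom)).comp x (zero_add n) := by rw [e.inv_hom_id]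
    _ = (Ext.mk₀ e.inv).comp ((Ext.mk₀ e.hom).comp x (zero_add n)) (zero_add n) :=
        (Ext.mk₀_comp_mk₀_assoc _ _ _).symm
    _ = 0 := by rw [h1, Ext.comp_zero]

lemma ext_sub_right {X Y Y' : A} (e : Y ≅ Y') {n : ℕ}
    (h : Subsingleton (Ext X Y n)) : Subsingleton (Ext X Y' n) := by
  apply subsingleton_of_forall_eq_zero
  intro x
  have h1 : x.comp (Ext.mk₀ e.inv) (add_zero n) = 0 := Subsingleton.elim _ _
  calc x = x.comp (Ext.mk₀ (𝟙 Y')) (add_zero n) := (Ext.comp_mk₀_id x).symm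
    _ = x.comp ((Ext.mk₀ e.inv).comp (Ext.mk₀ e.hom) (zero_add 0)) (add_zero n) := by
        rw [Ext.mk₀_comp_mk₀, e.inv_hom_id]
    _ = (x.comp (Ext.mk₀ e.inv) (add_zero n)).comp (Ext.mk₀ e.hom) (add_zero n) := by
        rw [Ext.comp_assoc_of_third_deg_zero]
    _ = 0 := by rw [h1, Ext.zero_comp]

lemma ext_sub_of_isZero_left {X Y : A} (hX : IsZero X) (n : ℕ) :
    Subsingleton (Ext X Y n) := by
  apply subsingleton_of_forall_eq_zero
  intro x
  calc x = (Ext.mk₀ (𝟙 X)).comp x (zero_add n) := (Ext.mk₀_id_comp x).symm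
    _ = 0 := by rw [hX.eq_of_src (𝟙 X) 0, Ext.mk₀_zero, Ext.zero_comp]

lemma ext_sub_of_isZero_right {X Y : A} (hY : IsZero Y) (n : ℕ) :
    Subsingleton (Ext X Y n) := by
  apply subsingleton_of_forall_eq_zero
  intro x
  calc x = x.comp (Ext.mk₀ (𝟙 Y)) (add_zero n) := (Ext.comp_mk₀_id x).symm
    _ = 0 := by rw [hY.eq_of_src (𝟙 Y) 0, Ext.mk₀_zero, Ext.comp_zero]

lemma vanish_X₃ {S : ShortComplex A} (hS : S.ShortExact) (Y : A) {n : ℕ}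
    (h₂ : Subsingleton (Ext S.X₂ Y (n + 1))) (h₁ : Subsingleton (Ext S.X₁ Y n)) :
    Subsingleton (Ext S.X₃ Y (n + 1)) := by
  apply subsingleton_of_forall_eq_zero
  intro x
  obtain ⟨x₁, hx₁⟩ := Ext.contravariant_sequence_exact₃ hS Y x
    (Subsingleton.elim _ 0) (n₀ := n) (by omega)
  rw [← hx₁, Subsingleton.elim x₁ 0, Ext.comp_zero]

lemma vanish_X₁ {S : ShortComplex A} (hS : S.ShortExact) (Y : A) {n : ℕ}
    (h₂ : Subsingleton (Ext S.X₂ Y n)) (h₃ : Subsingleton (Ext S.X₃ Y (n + 1))) :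
    Subsingleton (Ext S.X₁ Y n) := by
  apply subsingleton_of_forall_eq_zero
  intro x
  obtain ⟨x₂, hx₂⟩ := Ext.contravariant_sequence_exact₁ hS Y x
    (n₁ := n + 1) (by omega) (Subsingleton.elim _ 0)
  rw [← hx₂, Subsingleton.elim x₂ 0, Ext.comp_zero]

lemma vanish_cov_X₃ {S : ShortComplex A} (hS : S.ShortExact) (X : A)
    (h₂ : Subsingleton (Ext X S.X₂ 1)) (h₁ : Subsingleton (Ext X S.X₁ 2)) :
    Subsingleton (Ext X S.X₃ 1) := by
  apply subsingleton_of_forall_eq_zero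
  intro x
  obtain ⟨x₂, hx₂⟩ := Ext.covariant_sequence_exact₃ X hS x
    (n₁ := 2) rfl (Subsingleton.elim _ 0)
  rw [← hx₂, Subsingleton.elim x₂ 0, Ext.zero_comp]

end General

section Mod

variable {R : Type u} [Ring R]

/-- The zero module. -/
noncomputable abbrev zmod : ModuleCat.{u} R := ModuleCat.of R PUnit

lemma isZero_zmod : IsZero (zmod : ModuleCat.{u} R) :=
  ModuleCat.isZero_of_subsingleton _

/-- The short exact sequence `0 → 0 → M → M → 0`. -/
noncomputable def zeroSES (M : ModuleCat.{u} R) : ShortComplex (ModuleCat.{u} R) :=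
  ShortComplex.mk (0 : (zmod : ModuleCat.{u} R) ⟶ M) (𝟙 M) (by simp)

lemma zeroSES_shortExact (M : ModuleCat.{u} R) : (zeroSES M).ShortExact := by
  have s : (zeroSES M).Splitting :=
    { r := 0
      s := 𝟙 M
      f_r := isZero_zmod.eq_of_src _ _
      s_g := by dsimp [zeroSES]; simp
      id := by
        change (0 : M ⟶ zmod) ≫ (0 : (zmod : ModuleCat.{u} R) ⟶ M) + 𝟙 M ≫ 𝟙 M = 𝟙 M
        simp }
  exact s.shortExact

lemma pdLE_succ (T : ModuleCat.{u} R → Prop) (hT : T zmod) :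
    ∀ (k : ℕ) (M : ModuleCat.{u} R), pdLE T k M → pdLE T (k + 1) M := by
  intro k
  induction k with
  | zero =>
    intro M hM
    exact ⟨zeroSES M, zeroSES_shortExact M, ⟨Iso.refl M⟩, hM, hT⟩
  | succ k ih =>
    rintro M ⟨S, hS, e, h₂, h₁⟩
    exact ⟨S, hS, e, h₂, ih _ h₁⟩

lemma pdLE_mono_nat (T : ModuleCat.{u} R → Prop) (hT : T zmod) {j k : ℕ}
    (h : j ≤ k) (M : ModuleCat.{u} R) (hM : pdLE T j M) : pdLE T k M := by
  induction k with
  | zero => obtain rfl := Nat.le_zero.mp h; exact hM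
  | succ k ih =>
    rcases Nat.lt_or_ge j (k + 1) with h' | h'
    · exact pdLE_succ T hT k M (ih (by omega))
    · obtain rfl : j = k + 1 := by omega
      exact hM

lemma pdLE_mono {T T' : ModuleCat.{u} R → Prop} (h : ∀ X, T X → T' X) :
    ∀ (k : ℕ) (M : ModuleCat.{u} R), pdLE T k M → pdLE T' k M := by
  intro k
  induction k with
  | zero => exact fun M hM => h M hM
  | succ k ih =>
    rintro M ⟨S, hS, e, h₂, h₁⟩
    exact ⟨S, hS, e, h S.X₂ h₂, ih _ h₁⟩

section Pair

variable [HasExt.{w} (ModuleCat.{u} R)]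
    (U V : ModuleCat.{u} R → Prop)
    (hU : ∀ M : ModuleCat.{u} R,
      U M ↔ ∀ V₀ : ModuleCat.{u} R, V V₀ → Subsingleton (Abelian.Ext M V₀ 1))
    (hV : ∀ M : ModuleCat.{u} R,
      V M ↔ ∀ U₀ : ModuleCat.{u} R, U U₀ → Subsingleton (Abelian.Ext U₀ M 1))
    (hhered : ∀ (U₀ V₀ : ModuleCat.{u} R), U U₀ → V V₀ → ∀ n : ℕ, 1 ≤ n →
      Subsingleton (Abelian.Ext U₀ V₀ n))

include hU in
lemma U_zmod : U (zmod : ModuleCat.{u} R) :=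
  (hU _).2 fun V₀ _ => ext_sub_of_isZero_left isZero_zmod 1

include hV in
lemma V_zmod : V (zmod : ModuleCat.{u} R) :=
  (hV _).2 fun U₀ _ => ext_sub_of_isZero_right isZero_zmod 1

include hU hV hhered in
/-- Lemma A : anything of finite `𝒞`-dimension lies in `V`. -/
lemma lemA : ∀ (n : ℕ) (M : ModuleCat.{u} R),
    pdLE (fun X => U X ∧ V X) n M → V M := by
  intro n
  induction n with
  | zero => exact fun M hM => hM.2
  | succ n ih =>
    rintro M ⟨S, hS, ⟨e⟩, h₂, h₁⟩
    have hX₁V : V S.X₁ := ih _ h₁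
    have hX₃ : V S.X₃ := by
      rw [hV]
      intro U₀ hU₀
      exact vanish_cov_X₃ hS U₀ ((hV S.X₂).1 h₂.2 U₀ hU₀)
        (hhered U₀ S.X₁ hU₀ hX₁V 2 (by omega))
    rw [hV] at hX₃ ⊢
    exact fun U₀ hU₀ => ext_sub_right e (hX₃ U₀ hU₀)

include hhered in
/-- Lemma B : if `pdLE U k M` then `Ext^i (M, V₀) = 0` for `i ≥ k + 1`, `V₀ ∈ V`. -/
lemma lemB : ∀ (k : ℕ) (M : ModuleCat.{u} R), pdLE U k M →
    ∀ V₀, V V₀ → ∀ i : ℕ, k + 1 ≤ i → Subsingleton (Abelian.Ext M V₀ i) := by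
  intro k
  induction k with
  | zero => exact fun M hM V₀ hV₀ i hi => hhered M V₀ hM hV₀ i hi
  | succ k ih =>
    rintro M ⟨S, hS, ⟨e⟩, h₂, h₁⟩ V₀ hV₀ i hi
    obtain ⟨n, rfl⟩ : ∃ n, i = n + 1 := ⟨i - 1, by omega⟩
    have : Subsingleton (Abelian.Ext S.X₃ V₀ (n + 1)) :=
      vanish_X₃ hS V₀ (hhered S.X₂ V₀ h₂ hV₀ (n + 1) (by omega))
        (ih S.X₁ h₁ V₀ hV₀ n (by omega))
    exact ext_sub_left e this

include hU hV hhered in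
/-- Lemma C : if `M` has some finite `𝒞`-resolution and `Ext^{≥ k+1} (M, V) = 0`,
then `pdLE 𝒞 k M`. -/
lemma lemC : ∀ (k : ℕ) (M : ModuleCat.{u} R),
    (∃ n, pdLE (fun X => U X ∧ V X) n M) →
    (∀ V₀, V V₀ → ∀ i : ℕ, k + 1 ≤ i → Subsingleton (Abelian.Ext M V₀ i)) →
    pdLE (fun X => U X ∧ V X) k M := by
  intro k
  induction k with
  | zero =>
    rintro M ⟨n, hn⟩ hcond
    exact ⟨(hU M).2 fun V₀ hV₀ => hcond V₀ hV₀ 1 le_rfl, lemA U V hU hV hhered n M hn⟩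
  | succ k ih =>
    rintro M ⟨n, hn⟩ hcond
    match n, hn with
    | 0, hn =>
      exact pdLE_mono_nat _ ⟨U_zmod U V hU, V_zmod U V hV⟩
        (Nat.zero_le (k + 1)) M hn
    | (m + 1), ⟨S, hS, ⟨e⟩, h₂, h₁⟩ =>
      have hX₃cond : ∀ V₀, V V₀ → ∀ i : ℕ, k + 2 ≤ i →
          Subsingleton (Abelian.Ext S.X₃ V₀ i) :=
        fun V₀ hV₀ i hi => ext_sub_left e.symm (hcond V₀ hV₀ i hi)
      have hX₁cond : ∀ V₀, V V₀ → ∀ i : ℕ, k + 1 ≤ i →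
          Subsingleton (Abelian.Ext S.X₁ V₀ i) := by
        intro V₀ hV₀ i hi
        exact vanish_X₁ hS V₀ (hhered S.X₂ V₀ h₂.1 hV₀ i (by omega))
          (hX₃cond V₀ hV₀ (i + 1) (by omega))
      exact ⟨S, hS, ⟨e⟩, h₂, ih S.X₁ ⟨m, h₁⟩ hX₁cond⟩

end Pair

end Mod

end CotorsionAux

open RelHomDim in
/-- Let `(U, V)` be a hereditary cotorsion pair in `Mod R` with kernel
`𝒞 = U ∩ V`. Then for any left `R`-module `M` with finite `𝒞`-projective
dimension, the `U`-projective dimension of `M` equals its `𝒞`-projective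
dimension. -/
theorem cotorsionPair_kernel_pd_eq {R : Type u} [Ring R]
    [HasExt.{w} (ModuleCat.{u} R)]
    (U V : ModuleCat.{u} R → Prop)
    (hU : ∀ M : ModuleCat.{u} R,
      U M ↔ ∀ V₀ : ModuleCat.{u} R, V V₀ → Subsingleton (Abelian.Ext M V₀ 1))
    (hV : ∀ M : ModuleCat.{u} R,
      V M ↔ ∀ U₀ : ModuleCat.{u} R, U U₀ → Subsingleton (Abelian.Ext U₀ M 1))
    (hhered : ∀ (U₀ V₀ : ModuleCat.{u} R), U U₀ → V V₀ → ∀ n : ℕ, 1 ≤ n →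
      Subsingleton (Abelian.Ext U₀ V₀ n))
    (M : ModuleCat.{u} R) (hM : pd (fun X => U X ∧ V X) M ≠ ⊤) :
    pd U M = pd (fun X => U X ∧ V X) M := by
  have hne : ∃ n : ℕ, pdLE (fun X => U X ∧ V X) n M := by
    by_contra h
    push_neg at h
    apply hM
    have hempty : {n : ℕ∞ | ∃ k : ℕ, n = (k : ℕ∞) ∧
        pdLE (fun X => U X ∧ V X) k M} = ∅ := by
      ext n
      simp only [Set.mem_setOf_eq, Set.mem_empty_iff_false, iff_false]
      rintro ⟨k, rfl, hk⟩
      exact h k hk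
    unfold pd
    rw [hempty, sInf_empty]
  have hset : {n : ℕ∞ | ∃ k : ℕ, n = (k : ℕ∞) ∧ pdLE U k M} =
      {n : ℕ∞ | ∃ k : ℕ, n = (k : ℕ∞) ∧ pdLE (fun X => U X ∧ V X) k M} := by
    ext n
    constructor
    · rintro ⟨k, rfl, hk⟩
      exact ⟨k, rfl, CotorsionAux.lemC U V hU hV hhered k M hne
        (CotorsionAux.lemB U V hhered k M hk)⟩
    · rintro ⟨k, rfl, hk⟩
      exact ⟨k, rfl, CotorsionAux.pdLE_mono (fun X hX => hX.1) k M hk⟩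
  unfold pd
  rw [hset]
end
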